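/- arXiv:1505.03257 — 5 statements merged into one kernel-verified Lean document; each statement's English description precedes it below -/
import Mathlib

section
/- Consider the flipped logistic regression link function with intercept ζ = 0 and flipping probability p_e ∈ [0, 1/2), namely f(z) = (e^z − 1)/(e^z + 1) + 2p_e·(1 − e^z)/(1 + e^z) = (1 − 2p_e)·(e^z − 1)/(e^z + 1). Then μ₀ = μ₂ = 0, μ₁ = (1 − 2p_e)·E[2e^Z/(1 + e^Z)²] for Z ~ N(0,1), and consequently there exists an absolute constant C > 0 such that φ(f) = μ₁² ≥ C(1 − 2p_e)² > 0. -/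
open MeasureTheory ProbabilityTheory Real

/-- The Gaussian moments `μ_k = E[f(Z) Z^k]` for `Z ~ N(0,1)`. -/
noncomputable def gaussMoment (f : ℝ → ℝ) (k : ℕ) : ℝ :=
  ∫ z, f z * z ^ k ∂(gaussianReal 0 1)

/-- `φ(f) = μ₁² − μ₀μ₂ + μ₀²`. -/
noncomputable def phiFun (f : ℝ → ℝ) : ℝ :=
  gaussMoment f 1 ^ 2 - gaussMoment f 0 * gaussMoment f 2 + gaussMoment f 0 ^ 2

/-! The flipped link is `(1 - 2 p_e) g` with `g(z) = (e^z - 1)/(e^z + 1)` odd. By the symmetry of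
the standard Gaussian, `E[g(Z)] = E[g(Z) Z²] = 0`, and Stein's identity `E[g(Z) Z] = E[g'(Z)]`
gives `μ₁ = (1 - 2 p_e) E[2e^Z/(1 + e^Z)²]`. Hence `φ(f) = μ₁²`, and
`C = E[2e^Z/(1 + e^Z)²]² > 0` works. -/

open scoped NNReal

section GaussianIntegrationByParts

variable {μ : ℝ} {v : ℝ≥0}

lemma integrable_gaussianReal_iff (hv : v ≠ 0) {f : ℝ → ℝ} :
    Integrable f (gaussianReal μ v) ↔ Integrable (fun x => gaussianPDFReal μ v x * f x) := by
  rw [gaussianReal_of_var_ne_zero μ hv, integrable_withDensity_iff_integrable_smul'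
    (measurable_gaussianPDF μ v) (ae_of_all _ fun _ => gaussianPDF_lt_top)]
  simp only [toReal_gaussianPDF, smul_eq_mul]

lemma hasDerivAt_gaussianPDFReal (x : ℝ) :
    HasDerivAt (gaussianPDFReal μ v) (-(x - μ) / v * gaussianPDFReal μ v x) x := by
  rw [gaussianPDFReal_def]
  have hexponent : HasDerivAt (fun x : ℝ => -(x - μ) ^ 2 / (2 * v)) (-(x - μ) / v) x := by
    refine ((((hasDerivAt_id' x).sub_const μ).pow 2).neg.div_const (2 * (v : ℝ))).congr_deriv ?_
    ring
  refine (hexponent.exp.const_mul (√(2 * π * v))⁻¹).congr_deriv ?_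
  ring

/-- Stein's lemma. As `g` is bounded, `g · pdf` is integrable, so the integration by parts has no
boundary terms. -/
theorem integral_mul_sub_gaussianReal (hv : v ≠ 0) {g g' : ℝ → ℝ} {C : ℝ}
    (hg : ∀ x, HasDerivAt g (g' x) x) (hgC : ∀ x, |g x| ≤ C)
    (hg' : Integrable g' (gaussianReal μ v)) :
    ∫ x, g x * (x - μ) ∂gaussianReal μ v = v * ∫ x, g' x ∂gaussianReal μ v := by
  have hg_cont : Continuous g := continuous_iff_continuousAt.2 fun x => (hg x).continuousAt
  have hgC' : ∀ᵐ x ∂gaussianReal μ v, ‖g x‖ ≤ C := ae_of_all _ hgC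
  have hg_int : Integrable g (gaussianReal μ v) :=
    .of_bound hg_cont.aestronglyMeasurable C hgC'
  have hgX_int : Integrable (fun x => g x * (x - μ)) (gaussianReal μ v) :=
    (((memLp_id_gaussianReal 1).integrable le_rfl).sub (integrable_const μ)).bdd_mul
      hg_cont.aestronglyMeasurable hgC'
  rw [integrable_gaussianReal_iff hv] at hg_int hgX_int hg'
  have hibp := integral_mul_deriv_eq_deriv_mul_of_integrable
    (fun x _ => hg x) (fun x _ => hasDerivAt_gaussianPDFReal (μ := μ) (v := v) x) ?_ ?_ ?_
  · have hv' : (v : ℝ) ≠ 0 := NNReal.coe_ne_zero.2 hv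
    have hlhs : ∫ x, g x * (-(x - μ) / v * gaussianPDFReal μ v x)
        = -(v : ℝ)⁻¹ * ∫ x, gaussianPDFReal μ v x * (g x * (x - μ)) := by
      rw [← integral_const_mul]
      congr 1 with x
      ring
    have hrhs : ∫ x, g' x * gaussianPDFReal μ v x = ∫ x, gaussianPDFReal μ v x * g' x := by
      simp_rw [mul_comm]
    simp only [integral_gaussianReal_eq_integral_smul hv, smul_eq_mul]
    rwa [hlhs, hrhs, neg_mul, neg_inj, inv_mul_eq_iff_eq_mul₀ hv'] at hibp
  · convert hgX_int.const_mul (-(v : ℝ)⁻¹) using 1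
    ext x
    simp only [Pi.mul_apply]
    ring
  · exact hg'.congr (ae_of_all _ fun x => mul_comm _ _)
  · exact hg_int.congr (ae_of_all _ fun x => mul_comm _ _)

lemma integral_gaussianReal_eq_zero_of_odd {h : ℝ → ℝ} (hodd : ∀ x, h (-x) = -h x) :
    ∫ x, h x ∂gaussianReal 0 v = 0 := by
  have hmap : (gaussianReal 0 v).map (MeasurableEquiv.neg ℝ) = gaussianReal 0 v := by
    simpa using gaussianReal_map_neg (μ := 0) (v := v)
  have hsymm := integral_map_equiv (MeasurableEquiv.neg ℝ) h (μ := gaussianReal 0 v)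
  rw [hmap] at hsymm
  simp only [MeasurableEquiv.neg_apply, hodd, integral_neg] at hsymm
  linarith

end GaussianIntegrationByParts

/-- `2σ - 1 = tanh (· / 2)` for the logistic sigmoid `σ`; the flipped link for `p_e = 0`. -/
noncomputable def logisticLink (z : ℝ) : ℝ := (exp z - 1) / (exp z + 1)

lemma logisticLink_neg (z : ℝ) : logisticLink (-z) = -logisticLink z := by
  have := exp_pos z
  simp only [logisticLink, exp_neg]
  field_simp
  ring

lemma abs_logisticLink_le_one (z : ℝ) : |logisticLink z| ≤ 1 := by
  have := exp_pos z
  rw [logisticLink, abs_div, abs_of_pos (by positivity : 0 < exp z + 1),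
    div_le_one (by positivity), abs_le]
  constructor <;> linarith

lemma hasDerivAt_logisticLink (z : ℝ) :
    HasDerivAt logisticLink (2 * exp z / (1 + exp z) ^ 2) z := by
  have hne : exp z + 1 ≠ 0 := by positivity
  refine (((hasDerivAt_exp z).sub_const 1).div ((hasDerivAt_exp z).add_const 1) hne).congr_deriv ?_
  field_simp
  ring

lemma flippedLink_eq (pe z : ℝ) :
    (exp z - 1) / (exp z + 1) + 2 * pe * ((1 - exp z) / (1 + exp z))
      = (1 - 2 * pe) * logisticLink z := by
  have := exp_pos z
  rw [logisticLink]
  field_simp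
  ring

lemma deriv_logisticLink_pos (z : ℝ) : 0 < 2 * exp z / (1 + exp z) ^ 2 := by positivity

lemma deriv_logisticLink_le (z : ℝ) : 2 * exp z / (1 + exp z) ^ 2 ≤ 1 / 2 := by
  rw [div_le_iff₀ (by positivity)]
  nlinarith [sq_nonneg (exp z - 1)]

lemma integrable_deriv_logisticLink (P : Measure ℝ) [IsFiniteMeasure P] :
    Integrable (fun z => 2 * exp z / (1 + exp z) ^ 2) P := by
  have hcont : Continuous fun z => 2 * exp z / (1 + exp z) ^ 2 :=
    .div (by fun_prop) (by fun_prop) fun z => by positivity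
  refine .of_bound hcont.aestronglyMeasurable (1 / 2) (ae_of_all _ fun z => ?_)
  rw [norm_of_nonneg (deriv_logisticLink_pos z).le]
  exact deriv_logisticLink_le z

lemma integral_deriv_logisticLink_pos (P : Measure ℝ) [IsProbabilityMeasure P] :
    0 < ∫ z, 2 * exp z / (1 + exp z) ^ 2 ∂P := by
  rw [integral_pos_iff_support_of_nonneg (fun z => (deriv_logisticLink_pos z).le)
    (integrable_deriv_logisticLink P),
    Function.support_eq_univ fun z => (deriv_logisticLink_pos z).ne']
  simp

lemma integral_logisticLink_mul_pow_of_even {v : ℝ≥0} {k : ℕ} (hk : Even k) :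
    ∫ z, logisticLink z * z ^ k ∂gaussianReal 0 v = 0 :=
  integral_gaussianReal_eq_zero_of_odd fun z => by rw [logisticLink_neg, hk.neg_pow, neg_mul]

lemma integral_logisticLink_mul_id :
    ∫ z, logisticLink z * z ∂gaussianReal 0 1
      = ∫ z, 2 * exp z / (1 + exp z) ^ 2 ∂gaussianReal 0 1 := by
  simpa using integral_mul_sub_gaussianReal (μ := 0) one_ne_zero hasDerivAt_logisticLink
    abs_logisticLink_le_one (integrable_deriv_logisticLink _)

lemma gaussMoment_const_mul_logisticLink (c : ℝ) (k : ℕ) :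
    gaussMoment (fun z => c * logisticLink z) k
      = c * ∫ z, logisticLink z * z ^ k ∂gaussianReal 0 1 := by
  simp only [gaussMoment, mul_assoc, integral_const_mul]

/-- For the flipped logistic regression link function with intercept `ζ = 0` and
flipping probability `p_e ∈ [0, 1/2)`, i.e.
`f(z) = (e^z − 1)/(e^z + 1) + 2 p_e (1 − e^z)/(1 + e^z)`, one has `μ₀ = μ₂ = 0`,
`μ₁ = (1 − 2 p_e)·E[2e^Z/(1+e^Z)²]`, and there is an absolute constant `C > 0` with
`φ(f) = μ₁² ≥ C (1 − 2 p_e)² > 0`. -/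
theorem flipped_logistic_phi_pos :
    ∃ C : ℝ, 0 < C ∧ ∀ pe : ℝ, 0 ≤ pe → pe < 1 / 2 →
      ∀ f : ℝ → ℝ,
        (f = fun z => (Real.exp z - 1) / (Real.exp z + 1)
            + 2 * pe * ((1 - Real.exp z) / (1 + Real.exp z))) →
        gaussMoment f 0 = 0 ∧ gaussMoment f 2 = 0 ∧
        gaussMoment f 1
          = (1 - 2 * pe) * ∫ z, 2 * Real.exp z / (1 + Real.exp z) ^ 2 ∂(gaussianReal 0 1) ∧
        phiFun f = gaussMoment f 1 ^ 2 ∧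
        C * (1 - 2 * pe) ^ 2 ≤ phiFun f ∧
        0 < phiFun f := by
  set K := ∫ z, 2 * Real.exp z / (1 + Real.exp z) ^ 2 ∂(gaussianReal 0 1)
  have hK : 0 < K := integral_deriv_logisticLink_pos _
  refine ⟨K ^ 2, by positivity, fun pe _ hpe f hf => ?_⟩
  obtain rfl : f = fun z => (1 - 2 * pe) * logisticLink z :=
    hf.trans (funext (flippedLink_eq pe))
  have hμ₀ := gaussMoment_const_mul_logisticLink (1 - 2 * pe) 0
  have hμ₁ := gaussMoment_const_mul_logisticLink (1 - 2 * pe) 1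
  have hμ₂ := gaussMoment_const_mul_logisticLink (1 - 2 * pe) 2
  rw [integral_logisticLink_mul_pow_of_even ⟨0, rfl⟩, mul_zero] at hμ₀
  rw [integral_logisticLink_mul_pow_of_even ⟨1, rfl⟩, mul_zero] at hμ₂
  simp only [pow_one, integral_logisticLink_mul_id] at hμ₁
  have hφ : phiFun (fun z => (1 - 2 * pe) * logisticLink z) = ((1 - 2 * pe) * K) ^ 2 := by
    rw [phiFun, hμ₀, hμ₁]
    ring
  refine ⟨hμ₀, hμ₂, hμ₁, by rw [hφ, hμ₁], le_of_eq (by rw [hφ]; ring), ?_⟩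
  have : 0 < 1 - 2 * pe := by linarith
  rw [hφ]
  positivity
end

section
/- Consider the robust one-bit compressed sensing link function f(z) = 2·P(z + ε > 0) − 1 where ε ~ N(0, σ²) with σ > 0 (equivalently f(z) = 2Φ(z/σ) − 1 with Φ the standard Gaussian CDF). Then f is odd, so μ₀ = μ₂ = 0, and μ₁ ≥ √(2/π)·(1 − σ²)/(1 + σ²). Consequently, for σ² < 1/2, φ(f) = μ₁² ≥ (2/π)·((1 − σ²)/(1 + σ²))² > 0. -/
/-!
Symmetry of the noise makes the link `f(z) = 2 P(z + ε > 0) - 1` odd, so the even moments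
`μ₀, μ₂` vanish and `φ(f) = μ₁²`. For `μ₁`, write `z P(z + ε > 0) = E_ε[z 1{z + ε > 0}]` and swap
the two Gaussian integrals. With `p_v` the centred Gaussian density of variance `v`, the inner
tail integral is `∫_{-u}^∞ z p_1(z) dz = p_1(u)`, hence
`μ₁ = 2 E[p_1(ε)] = 2 ∫ p_{σ²} p_1 = 2 p_{1+σ²}(0) = √(2/π) / √(1+σ²)`,
which dominates `√(2/π) (1-σ²)/(1+σ²)`.
-/

open MeasureTheory ProbabilityTheory Real

open Set Filter
open scoped NNReal Topology

theorem Function.Odd.integral_eq_zero {G E : Type*} [MeasurableSpace G] [AddGroup G]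
    [MeasurableNeg G] [NormedAddCommGroup E] [NormedSpace ℝ E] {μ : Measure G}
    [μ.IsNegInvariant] {g : G → E} (hg : g.Odd) : ∫ x, g x ∂μ = 0 := by
  have h : ∫ x, g x ∂μ = -∫ x, g x ∂μ := by
    rw [← integral_neg, ← integral_neg_eq_self g μ]
    simp only [hg.eq]
  have h2 : (2 : ℝ) • ∫ x, g x ∂μ = 0 := by
    rw [two_smul]; nth_rewrite 2 [h]; exact add_neg_cancel _
  simpa using h2

lemma setOf_pos_add (z : ℝ) : {u : ℝ | 0 < z + u} = Ioi (-z) := by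
  ext u; simp [neg_lt_iff_pos_add']

namespace ProbabilityTheory

section GaussianDensity

variable {μ : ℝ} {v w : ℝ≥0}

instance isNegInvariant_gaussianReal (v : ℝ≥0) : (gaussianReal 0 v).IsNegInvariant :=
  ⟨by rw [Measure.neg, gaussianReal_map_neg, neg_zero]⟩

lemma integrable_gaussianReal_iff {E : Type*} [NormedAddCommGroup E] [NormedSpace ℝ E]
    {f : ℝ → E} (hv : v ≠ 0) :
    Integrable f (gaussianReal μ v) ↔ Integrable (fun x ↦ gaussianPDFReal μ v x • f x) := by
  simp [gaussianReal, hv,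
    integrable_withDensity_iff_integrable_smul' (measurable_gaussianPDF _ _)
      (ae_of_all _ fun _ ↦ gaussianPDF_lt_top)]

lemma setIntegral_gaussianReal_eq_setIntegral_smul {E : Type*} [NormedAddCommGroup E]
    [NormedSpace ℝ E] {f : ℝ → E} {s : Set ℝ} (hv : v ≠ 0) (hs : MeasurableSet s) :
    ∫ x in s, f x ∂(gaussianReal μ v) = ∫ x in s, gaussianPDFReal μ v x • f x := by
  simp [gaussianReal, hv,
    setIntegral_withDensity_eq_setIntegral_toReal_smul (measurable_gaussianPDF _ _)
      (ae_of_all _ fun _ ↦ gaussianPDF_lt_top) _ hs]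

lemma hasDerivAt_gaussianPDFReal (μ : ℝ) (v : ℝ≥0) (x : ℝ) :
    HasDerivAt (gaussianPDFReal μ v) (-((x - μ) / v) * gaussianPDFReal μ v x) x := by
  have h : HasDerivAt (fun y ↦ -(y - μ) ^ 2 / (2 * v)) (-(2 * (x - μ)) / (2 * v)) x := by
    simpa using (((hasDerivAt_id x).sub_const μ).pow 2).neg.div_const (2 * (v : ℝ))
  rw [gaussianPDFReal_def]
  exact (h.exp.const_mul _).congr_deriv (by ring)

lemma integrable_sub_mul_gaussianPDFReal (μ : ℝ) (v : ℝ≥0) :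
    Integrable (fun x ↦ (x - μ) * gaussianPDFReal μ v x) := by
  rcases eq_or_ne v 0 with rfl | hv
  · simp
  have h : Integrable (fun x ↦ x - μ) (gaussianReal μ v) :=
    ((memLp_id_gaussianReal 1).integrable le_rfl).sub (integrable_const μ)
  simpa [mul_comm] using (integrable_gaussianReal_iff hv).mp h

lemma integral_Ioi_sub_mul_gaussianPDFReal (μ : ℝ) (v : ℝ≥0) (a : ℝ) :
    ∫ x in Ioi a, (x - μ) * gaussianPDFReal μ v x = v * gaussianPDFReal μ v a := by
  have hderiv (x : ℝ) : HasDerivAt (fun y ↦ -v * gaussianPDFReal μ v y)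
      ((x - μ) * gaussianPDFReal μ v x) x := by
    refine ((hasDerivAt_gaussianPDFReal μ v x).const_mul (-(v : ℝ))).congr_deriv ?_
    rcases eq_or_ne v 0 with rfl | hv
    · simp
    · field_simp
  have hlim : Tendsto (fun y ↦ -v * gaussianPDFReal μ v y) atTop (𝓝 0) :=
    tendsto_zero_of_hasDerivAt_of_integrableOn_Ioi (a := a) (fun x _ ↦ hderiv x)
      (integrable_sub_mul_gaussianPDFReal μ v).integrableOn
      ((integrable_gaussianPDFReal μ v).const_mul (-v)).integrableOn
  rw [integral_Ioi_of_hasDerivAt_of_tendsto' (fun x _ ↦ hderiv x)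
    (integrable_sub_mul_gaussianPDFReal μ v).integrableOn hlim]
  ring

lemma setIntegral_Ioi_id_gaussianReal (hw : w ≠ 0) (a : ℝ) :
    ∫ x in Ioi a, x ∂gaussianReal 0 w = w * gaussianPDFReal 0 w a := by
  rw [setIntegral_gaussianReal_eq_setIntegral_smul hw measurableSet_Ioi,
    ← integral_Ioi_sub_mul_gaussianPDFReal]
  simp only [smul_eq_mul, sub_zero, mul_comm]

lemma integral_gaussianPDFReal_mul_gaussianPDFReal (hv : v ≠ 0) (hw : w ≠ 0) :
    ∫ x, gaussianPDFReal 0 v x * gaussianPDFReal 0 w x = gaussianPDFReal 0 (v + w) 0 := by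
  have hv' : (0 : ℝ) < v := by positivity
  have hw' : (0 : ℝ) < w := by positivity
  have hprod (x : ℝ) : gaussianPDFReal 0 v x * gaussianPDFReal 0 w x =
      (√(2 * π * v))⁻¹ * (√(2 * π * w))⁻¹ * rexp (-((v + w) / (2 * v * w)) * x ^ 2) := by
    simp only [gaussianPDFReal, sub_zero]
    rw [mul_mul_mul_comm, ← Real.exp_add]
    congr 2
    field_simp
    ring
  simp_rw [hprod]
  rw [integral_const_mul, integral_gaussian]
  simp only [gaussianPDFReal, NNReal.coe_add, sub_self, ne_eq, OfNat.ofNat_ne_zero,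
    not_false_eq_true, zero_pow, neg_zero, zero_div, exp_zero, mul_one]
  rw [← sqrt_inv, ← sqrt_inv, ← sqrt_inv, ← sqrt_mul (by positivity),
    ← sqrt_mul (by positivity)]
  congr 1
  field_simp

lemma integral_gaussianPDFReal_gaussianReal (hv : v ≠ 0) (hw : w ≠ 0) :
    ∫ x, gaussianPDFReal 0 w x ∂gaussianReal 0 v = gaussianPDFReal 0 (v + w) 0 := by
  rw [integral_gaussianReal_eq_integral_smul hv]
  exact integral_gaussianPDFReal_mul_gaussianPDFReal hv hw

end GaussianDensity

end ProbabilityTheory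

/-- `E[sign(z + ε)]` for noise `ε ~ ν` without atoms. -/
noncomputable def oneBitLink (ν : Measure ℝ) (z : ℝ) : ℝ :=
  2 * ν.real {u | 0 < z + u} - 1

lemma oneBitLink_neg (ν : Measure ℝ) [IsProbabilityMeasure ν] [NullSingletonClass ν]
    [ν.IsNegInvariant] (z : ℝ) :
    oneBitLink ν (-z) = -oneBitLink ν z := by
  have hsymm : ν.real (Ioi (-z)) = ν.real (Iic z) := by
    rw [← neg_Iio, measureReal_def, Measure.measure_neg, measure_congr Iio_ae_eq_Iic,
      measureReal_def]
  have hcompl : ν.real (Ioi z) = 1 - ν.real (Iic z) := by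
    rw [← compl_Iic, probReal_compl_eq_one_sub measurableSet_Iic]
  simp only [oneBitLink, setOf_pos_add, neg_neg, hsymm, hcompl]
  ring

section OneBitLink

variable {w : ℝ≥0} (ν : Measure ℝ) [IsFiniteMeasure ν]

lemma measurable_measureReal_setOf_pos_add : Measurable fun z ↦ ν.real {u | 0 < z + u} := by
  refine Monotone.measurable fun a b hab ↦ ?_
  simp only [setOf_pos_add]
  exact measureReal_mono (Ioi_subset_Ioi (neg_le_neg hab))

lemma integrable_mul_measureReal_setOf_pos_add :
    Integrable (fun z ↦ z * ν.real {u | 0 < z + u}) (gaussianReal 0 w) := by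
  refine Integrable.mono'
    (((memLp_id_gaussianReal 1).integrable le_rfl).norm.mul_const (ν.real univ))
    (measurable_id.mul (measurable_measureReal_setOf_pos_add ν)).aestronglyMeasurable
    (ae_of_all _ fun z ↦ ?_)
  rw [norm_mul, Real.norm_of_nonneg measureReal_nonneg]
  exact mul_le_mul_of_nonneg_left (measureReal_mono (subset_univ _)) (norm_nonneg z)

lemma integral_mul_measureReal_setOf_pos_add (hw : w ≠ 0) :
    ∫ z, z * ν.real {u | 0 < z + u} ∂gaussianReal 0 w = w * ∫ u, gaussianPDFReal 0 w u ∂ν := by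
  set g : ℝ × ℝ → ℝ := {p | 0 < p.1 + p.2}.indicator Prod.fst
  have hg : Integrable g ((gaussianReal 0 w).prod ν) := by
    have hmeas : MeasurableSet {p : ℝ × ℝ | 0 < p.1 + p.2} :=
      measurableSet_lt measurable_const (by fun_prop)
    exact Integrable.mono' (((memLp_id_gaussianReal 1).integrable le_rfl).norm.comp_fst ν)
      (measurable_fst.indicator hmeas).aestronglyMeasurable
      (ae_of_all _ fun p ↦ norm_indicator_le_norm_self _ _)
  have hsection_u (z : ℝ) : ∫ u, g (z, u) ∂ν = z * ν.real {u | 0 < z + u} := by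
    have hsection : (fun u ↦ g (z, u)) = {u | 0 < z + u}.indicator fun _ ↦ z := by
      ext u; simp [g, indicator_apply]
    rw [hsection, integral_indicator_const _ (by rw [setOf_pos_add]; exact measurableSet_Ioi),
      smul_eq_mul, mul_comm]
  have hsection_z (u : ℝ) : ∫ z, g (z, u) ∂gaussianReal 0 w = w * gaussianPDFReal 0 w u := by
    have hsection : (fun z ↦ g (z, u)) = (Ioi (-u)).indicator fun z ↦ z := by
      ext z; simp [g, indicator_apply, neg_lt_iff_pos_add]
    rw [hsection, integral_indicator measurableSet_Ioi, setIntegral_Ioi_id_gaussianReal hw]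
    simp [gaussianPDFReal]
  calc ∫ z, z * ν.real {u | 0 < z + u} ∂gaussianReal 0 w
      = ∫ z, ∫ u, g (z, u) ∂ν ∂gaussianReal 0 w := by simp only [hsection_u]
    _ = ∫ u, ∫ z, g (z, u) ∂gaussianReal 0 w ∂ν := integral_integral_swap hg
    _ = w * ∫ u, gaussianPDFReal 0 w u ∂ν := by simp only [hsection_z, integral_const_mul]

lemma integral_mul_oneBitLink (hw : w ≠ 0) :
    ∫ z, z * oneBitLink ν z ∂gaussianReal 0 w = 2 * w * ∫ u, gaussianPDFReal 0 w u ∂ν := by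
  have hsplit (z : ℝ) : z * oneBitLink ν z = 2 * (z * ν.real {u | 0 < z + u}) - z := by
    rw [oneBitLink]; ring
  have hid : Integrable (fun z : ℝ ↦ z) (gaussianReal 0 w) :=
    (memLp_id_gaussianReal 1).integrable le_rfl
  simp_rw [hsplit]
  rw [integral_sub ((integrable_mul_measureReal_setOf_pos_add ν).const_mul 2) hid,
    integral_const_mul, integral_mul_measureReal_setOf_pos_add ν hw, integral_id_gaussianReal]
  ring

end OneBitLink

lemma gaussMoment_eq_zero_of_odd {f : ℝ → ℝ} (hf : f.Odd) {k : ℕ} (hk : Even k) :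
    gaussMoment f k = 0 :=
  (hf.mul_even fun z ↦ hk.neg_pow z).integral_eq_zero

lemma phiFun_eq_sq_of_gaussMoment_zero {f : ℝ → ℝ} (h : gaussMoment f 0 = 0) :
    phiFun f = gaussMoment f 1 ^ 2 := by
  simp [phiFun, h]

lemma sqrt_two_div_pi_mul_le_two_mul_gaussianPDFReal (v : ℝ≥0) :
    √(2 / π) * ((1 - v) / (1 + v)) ≤ 2 * gaussianPDFReal 0 (v + 1) 0 := by
  have hpdf : 2 * gaussianPDFReal 0 (v + 1) 0 = √(2 / π) * (√(1 + v))⁻¹ := by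
    simp only [gaussianPDFReal, NNReal.coe_add, NNReal.coe_one, sub_self, ne_eq,
      OfNat.ofNat_ne_zero, not_false_eq_true, zero_pow, neg_zero, zero_div, exp_zero, mul_one]
    rw [← sqrt_inv, ← sqrt_inv, ← sqrt_mul (by positivity), ← abs_two, ← sqrt_sq_eq_abs,
      ← sqrt_mul (by positivity)]
    congr 1
    field_simp
    ring
  have hle : 1 - (v : ℝ) ≤ √(1 + v) :=
    calc 1 - (v : ℝ) ≤ 1 := by simp
      _ ≤ √(1 + v) := one_le_sqrt.mpr (by simp)
  rw [hpdf, inv_eq_one_div, ← sqrt_div_self']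
  gcongr

/-- For the robust one-bit compressed sensing link function
`f(z) = 2·P(z + ε > 0) − 1` with `ε ~ N(0, σ²)`, `σ > 0`: `f` is odd, hence `μ₀ = μ₂ = 0`,
`μ₁ ≥ √(2/π)·(1−σ²)/(1+σ²)`, and for `σ² < 1/2`,
`φ(f) = μ₁² ≥ (2/π)·((1−σ²)/(1+σ²))² > 0`. -/
theorem robust_one_bit_cs_phi_small_noise (σ : ℝ) (hσ : 0 < σ) (f : ℝ → ℝ)
    (hf : f = fun z =>
      2 * ((gaussianReal 0 (Real.toNNReal (σ ^ 2))) {u : ℝ | 0 < z + u}).toReal - 1) :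
    (∀ z : ℝ, f (-z) = -f z) ∧
    gaussMoment f 0 = 0 ∧ gaussMoment f 2 = 0 ∧
    Real.sqrt (2 / Real.pi) * ((1 - σ ^ 2) / (1 + σ ^ 2)) ≤ gaussMoment f 1 ∧
    (σ ^ 2 < 1 / 2 →
      phiFun f = gaussMoment f 1 ^ 2 ∧
      (2 / Real.pi) * ((1 - σ ^ 2) / (1 + σ ^ 2)) ^ 2 ≤ phiFun f ∧
      0 < phiFun f) := by
  set v := Real.toNNReal (σ ^ 2)
  have hv : v ≠ 0 := by simpa [v] using hσ.ne'
  have hvσ : (v : ℝ) = σ ^ 2 := Real.coe_toNNReal _ (sq_nonneg σ)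
  have := nullSingletonClass_gaussianReal (μ := 0) hv
  replace hf : f = oneBitLink (gaussianReal 0 v) := hf
  have hodd : f.Odd := hf ▸ oneBitLink_neg _
  have hμ₀ := gaussMoment_eq_zero_of_odd hodd Even.zero
  have hμ₁ : gaussMoment f 1 = 2 * gaussianPDFReal 0 (v + 1) 0 := by
    simp only [gaussMoment, hf, pow_one, mul_comm (oneBitLink _ _)]
    rw [integral_mul_oneBitLink _ one_ne_zero,
      integral_gaussianPDFReal_gaussianReal hv one_ne_zero, NNReal.coe_one, mul_one]
  have hlower := sqrt_two_div_pi_mul_le_two_mul_gaussianPDFReal v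
  rw [hvσ, ← hμ₁] at hlower
  refine ⟨hodd, hμ₀, gaussMoment_eq_zero_of_odd hodd even_two, hlower, fun hσ2 ↦ ?_⟩
  have hratio : 0 < (1 - σ ^ 2) / (1 + σ ^ 2) := div_pos (by linarith) (by positivity)
  have hsq : 2 / π * ((1 - σ ^ 2) / (1 + σ ^ 2)) ^ 2 ≤ phiFun f := by
    rw [phiFun_eq_sq_of_gaussMoment_zero hμ₀, ← sq_sqrt (by positivity : 0 ≤ 2 / π), ← mul_pow]
    exact pow_le_pow_left₀ (by positivity) hlower 2
  exact ⟨phiFun_eq_sq_of_gaussMoment_zero hμ₀, hsq, lt_of_lt_of_le (by positivity) hsq⟩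
end

section
/- Consider the one-bit phase retrieval link function f(z) = sign(|z| − θ) for a threshold θ > 0, and let θ_m be the median of |Z| for Z ~ N(0,1), i.e., P(|Z| ≥ θ_m) = 1/2. Then sign(φ(f)) = sign(θ − θ_m), and there exists an absolute constant C > 0 such that |φ(f)| ≥ C·θ·|θ − θ_m|·e^{−θ²}. In particular φ(f) > 0 for θ > θ_m and φ(f) < 0 for 0 < θ < θ_m. -/
open MeasureTheory ProbabilityTheory Real

/-!
Almost everywhere `sign (|z| - θ) = 2 • 𝟙{θ < |z|} - 1`. The link is even, so `μ₁ = 0`, and the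
symmetry of the Gaussian folds the other moments onto the tail `(θ, ∞)`: with `Q` the Gaussian tail
and `p` the density, `μ₀ = 4 Q(θ) - 1` and, since `(z² - 1) p(z) = -(z p(z))'`,
`μ₂ = μ₀ + 4 θ p(θ)`. Hence `φ(f) = μ₀ (μ₀ - μ₂) = 4 θ p(θ) (1 - 4 Q(θ))`, and the median condition
`Q(θ_m) = 1/4` turns this into `16 θ p(θ) (Q(θ_m) - Q(θ)) = 16 θ p(θ) p(ξ) (θ - θ_m)` for some `ξ`
between `θ` and `θ_m` (mean value theorem). Finally `ξ² ≤ θ² + θ_m²` gives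
`p(θ) p(ξ) ≥ p(0) p(θ_m) e^{-θ²}`.
-/

open Set Filter Topology
open scoped NNReal

namespace Real

theorem sign_mul_of_pos {c : ℝ} (hc : 0 < c) (x : ℝ) : Real.sign (c * x) = Real.sign x := by
  rcases lt_trichotomy x 0 with hx | rfl | hx
  · rw [sign_of_neg hx, sign_of_neg (mul_neg_of_pos_of_neg hc hx)]
  · rw [mul_zero]
  · rw [sign_of_pos hx, sign_of_pos (mul_pos hc hx)]

end Real

section MeasureOnReal

variable {μ : Measure ℝ}

theorem measure_setOf_abs_eq [NullSingletonClass μ] (θ : ℝ) : μ {z | |z| = θ} = 0 :=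
  measure_mono_null (fun _ hz => eq_or_eq_neg_of_abs_eq hz)
    ((Set.toFinite ({θ, -θ} : Set ℝ)).measure_zero μ)

theorem sign_abs_sub_ae_eq_indicator [NullSingletonClass μ] (θ : ℝ) :
    (fun z => Real.sign (|z| - θ)) =ᵐ[μ] fun z => {z | θ < |z|}.indicator 2 z - 1 := by
  filter_upwards [measure_eq_zero_iff_ae_notMem.1 (measure_setOf_abs_eq (μ := μ) θ)] with z hz
  rcases lt_or_gt_of_ne (hz : |z| ≠ θ) with h | h
  · simp [Real.sign_of_neg (sub_neg.2 h), h.not_gt]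
  · norm_num [Real.sign_of_pos (sub_pos.2 h), h]

theorem measure_le_abs_eq_measure_lt_abs [NullSingletonClass μ] (θ : ℝ) :
    μ {z | θ ≤ |z|} = μ {z | θ < |z|} := by
  have hsplit : {z : ℝ | θ ≤ |z|} = {z | θ < |z|} ∪ {z | |z| = θ} := by
    ext z; simp [le_iff_lt_or_eq, eq_comm]
  rw [hsplit]
  exact measure_congr (union_ae_eq_left_of_ae_eq_empty (ae_eq_empty.2 (measure_setOf_abs_eq θ)))

theorem integral_sign_abs_sub_mul [NullSingletonClass μ] (θ : ℝ) {g : ℝ → ℝ}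
    (hg : Integrable g μ) :
    ∫ z, Real.sign (|z| - θ) * g z ∂μ = 2 * ∫ z in {z | θ < |z|}, g z ∂μ - ∫ z, g z ∂μ := by
  have hs : MeasurableSet {z : ℝ | θ < |z|} := measurableSet_lt measurable_const measurable_abs
  calc ∫ z, Real.sign (|z| - θ) * g z ∂μ
      = ∫ z, {z | θ < |z|}.indicator (fun z => 2 * g z) z - g z ∂μ := by
        refine integral_congr_ae ((sign_abs_sub_ae_eq_indicator θ).mono fun z hz => ?_)
        simp only [hz, indicator_apply, Pi.ofNat_apply]
        split_ifs <;> ring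
    _ = _ := by
      rw [integral_sub ((hg.const_mul 2).indicator hs) hg, integral_indicator hs,
        integral_const_mul]

theorem integral_eq_zero_of_odd (hμ : μ.map (fun x => -x) = μ) {g : ℝ → ℝ}
    (hg : ∀ z, g (-z) = -g z) : ∫ z, g z ∂μ = 0 := by
  have h : ∫ z, g z ∂μ.map (fun x => -x) = ∫ z, g (-z) ∂μ :=
    integral_map_equiv (MeasurableEquiv.neg ℝ) g
  simp only [hμ, hg, integral_neg] at h
  linarith

theorem setIntegral_lt_abs_eq (hμ : μ.map (fun x => -x) = μ) {θ : ℝ} (hθ : 0 ≤ θ) {g : ℝ → ℝ}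
    (hg : Integrable g μ) :
    ∫ z in {z | θ < |z|}, g z ∂μ = ∫ z in Ioi θ, (g z + g (-z)) ∂μ := by
  have hset : {z : ℝ | θ < |z|} = Iio (-θ) ∪ Ioi θ := by
    ext z
    simp only [mem_ofPred_eq, lt_abs, mem_union, mem_Iio, mem_Ioi]
    constructor <;> rintro (h | h) <;> first | (left; linarith) | (right; linarith)
  have hdisj : Disjoint (Iio (-θ)) (Ioi θ) :=
    disjoint_left.2 fun z h1 h2 => by simp only [mem_Iio, mem_Ioi] at h1 h2; linarith
  have hg_neg : Integrable (fun z => g (-z)) μ := by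
    rw [← hμ] at hg
    exact (integrable_map_equiv (MeasurableEquiv.neg ℝ) g).1 hg
  have hreflect : ∫ z in Iio (-θ), g z ∂μ = ∫ z in Ioi θ, g (-z) ∂μ := by
    conv_lhs => rw [← hμ]
    exact (setIntegral_map_equiv (MeasurableEquiv.neg ℝ) g _).trans (by simp)
  rw [hset, setIntegral_union hdisj measurableSet_Ioi hg.integrableOn hg.integrableOn, hreflect,
    integral_add hg.integrableOn hg_neg.integrableOn, add_comm]

theorem measureReal_lt_abs_eq [IsFiniteMeasure μ] (hμ : μ.map (fun x => -x) = μ) {θ : ℝ}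
    (hθ : 0 ≤ θ) :
    μ.real {z | θ < |z|} = 2 * μ.real (Ioi θ) := by
  simpa [mul_comm, ← two_mul] using setIntegral_lt_abs_eq hμ hθ (integrable_const (1 : ℝ))

end MeasureOnReal

section Gaussian

variable {m : ℝ} {v : ℝ≥0}

theorem continuous_gaussianPDFReal (m : ℝ) (v : ℝ≥0) : Continuous (gaussianPDFReal m v) := by
  rw [gaussianPDFReal_def]; fun_prop

theorem integrable_pow_gaussianReal (k : ℕ) : Integrable (fun z => z ^ k) (gaussianReal m v) :=
  (integrable_norm_iff (by fun_prop)).1 <| by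
    simpa [norm_pow] using (memLp_id_gaussianReal (μ := m) (v := v) k).integrable_norm_pow'

theorem integral_sq_gaussianReal : ∫ z, z ^ 2 ∂gaussianReal m v = v + m ^ 2 := by
  have h := variance_eq_sub (memLp_id_gaussianReal' (μ := m) (v := v) 2 (by simp))
  simp only [variance_id_gaussianReal, Pi.pow_apply, id_eq] at h
  rw [integral_id_gaussianReal] at h
  linarith

theorem integrable_gaussianPDFReal_mul_iff (hv : v ≠ 0) {g : ℝ → ℝ} :
    Integrable (fun x => gaussianPDFReal m v x * g x) ↔ Integrable g (gaussianReal m v) := by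
  rw [gaussianReal_of_var_ne_zero m hv, integrable_withDensity_iff_integrable_smul'
    (measurable_gaussianPDF m v) (ae_of_all _ fun _ => gaussianPDF_lt_top)]
  simp

theorem setIntegral_gaussianReal_eq (hv : v ≠ 0) {s : Set ℝ} (hs : MeasurableSet s) (g : ℝ → ℝ) :
    ∫ x in s, g x ∂gaussianReal m v = ∫ x in s, gaussianPDFReal m v x * g x := by
  rw [← integral_indicator hs, ← integral_indicator hs, integral_gaussianReal_eq_integral_smul hv]
  congr with x
  by_cases hx : x ∈ s <;> simp [hx]

theorem gaussianPDFReal_zero_one (x : ℝ) :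
    gaussianPDFReal 0 1 x = (√(2 * π))⁻¹ * exp (-x ^ 2 / 2) := by
  simp [gaussianPDFReal]

theorem hasDerivAt_gaussianPDFReal_mul_id (x : ℝ) :
    HasDerivAt (fun y => gaussianPDFReal 0 1 y * y) (gaussianPDFReal 0 1 x * (1 - x ^ 2)) x := by
  simp only [gaussianPDFReal_zero_one]
  refine ((((((hasDerivAt_pow 2 x).fun_neg).div_const 2).exp).const_mul
    (√(2 * π))⁻¹).fun_mul (hasDerivAt_id' x)).congr_deriv ?_
  push_cast
  ring

instance : NullSingletonClass (gaussianReal 0 1) := nullSingletonClass_gaussianReal one_ne_zero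

theorem gaussianReal_zero_one_map_neg :
    (gaussianReal 0 1).map (fun x => -x) = gaussianReal 0 1 := by
  simpa using gaussianReal_map_neg (μ := 0) (v := 1)

theorem setIntegral_Ioi_sq_gaussianReal (a : ℝ) :
    ∫ z in Ioi a, z ^ 2 ∂gaussianReal 0 1
      = (gaussianReal 0 1).real (Ioi a) + a * gaussianPDFReal 0 1 a := by
  have hderiv := hasDerivAt_gaussianPDFReal_mul_id
  have hint : Integrable (fun x => gaussianPDFReal 0 1 x * (1 - x ^ 2)) :=
    (integrable_gaussianPDFReal_mul_iff one_ne_zero).2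
      ((integrable_const 1).sub (integrable_pow_gaussianReal 2))
  have hlim : Tendsto (fun y => gaussianPDFReal 0 1 y * y) atTop (𝓝 0) :=
    tendsto_zero_of_hasDerivAt_of_integrableOn_Ioi (a := 0) (fun x _ => hderiv x)
      hint.integrableOn
      ((integrable_gaussianPDFReal_mul_iff one_ne_zero).2
        (by simpa using integrable_pow_gaussianReal (m := 0) 1)).integrableOn
  have htail : ∫ z in Ioi a, (1 - z ^ 2) ∂gaussianReal 0 1 = -(a * gaussianPDFReal 0 1 a) := by
    rw [setIntegral_gaussianReal_eq one_ne_zero measurableSet_Ioi,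
      integral_Ioi_of_hasDerivAt_of_tendsto' (fun x _ => hderiv x) hint.integrableOn hlim,
      zero_sub, mul_comm]
  rw [integral_sub (integrable_const 1).integrableOn (integrable_pow_gaussianReal 2).integrableOn,
    setIntegral_const, smul_eq_mul, mul_one] at htail
  linarith

end Gaussian

section OneBit

theorem gaussMoment_one_of_even {f : ℝ → ℝ} (hf : ∀ z, f (-z) = f z) : gaussMoment f 1 = 0 :=
  integral_eq_zero_of_odd gaussianReal_zero_one_map_neg fun z => by rw [hf]; ring

theorem gaussMoment_sign_abs_sub {θ : ℝ} (hθ : 0 ≤ θ) (k : ℕ) :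
    gaussMoment (fun z => Real.sign (|z| - θ)) k
      = 2 * ∫ z in Ioi θ, (z ^ k + (-z) ^ k) ∂gaussianReal 0 1 - ∫ z, z ^ k ∂gaussianReal 0 1 := by
  rw [gaussMoment, integral_sign_abs_sub_mul θ (integrable_pow_gaussianReal k),
    setIntegral_lt_abs_eq gaussianReal_zero_one_map_neg hθ (integrable_pow_gaussianReal k)]

theorem phiFun_sign_abs_sub {θ : ℝ} (hθ : 0 ≤ θ) :
    phiFun (fun z => Real.sign (|z| - θ))
      = 4 * θ * gaussianPDFReal 0 1 θ * (1 - 4 * (gaussianReal 0 1).real (Ioi θ)) := by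
  have h0 := gaussMoment_sign_abs_sub hθ 0
  have h1 := gaussMoment_one_of_even fun z => by rw [abs_neg] (f := fun z => Real.sign (|z| - θ))
  have h2 := gaussMoment_sign_abs_sub hθ 2
  simp only [pow_zero, integral_const, smul_eq_mul, probReal_univ,
    measureReal_restrict_apply_univ] at h0
  simp only [neg_sq, ← two_mul, integral_const_mul, setIntegral_Ioi_sq_gaussianReal,
    integral_sq_gaussianReal] at h2
  rw [phiFun, h0, h1, h2]
  push_cast
  ring

theorem measureReal_Ioi_eq_of_median {θ : ℝ} (hθ : 0 ≤ θ)
    (hmed : gaussianReal 0 1 {z : ℝ | θ ≤ |z|} = 1 / 2) :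
    (gaussianReal 0 1).real (Ioi θ) = 1 / 4 := by
  have h := congrArg ENNReal.toReal hmed
  rw [measure_le_abs_eq_measure_lt_abs, ← measureReal_def,
    measureReal_lt_abs_eq gaussianReal_zero_one_map_neg hθ] at h
  norm_num at h
  linarith

theorem exists_measureReal_Ioi_sub_eq (a b : ℝ) :
    ∃ ξ ∈ uIcc a b, (gaussianReal 0 1).real (Ioi a) - (gaussianReal 0 1).real (Ioi b)
      = gaussianPDFReal 0 1 ξ * (b - a) := by
  wlog hab : a ≤ b generalizing a b
  · obtain ⟨ξ, hξ, h⟩ := this b a (le_of_not_ge hab)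
    exact ⟨ξ, uIcc_comm a b ▸ hξ, by linarith⟩
  have htail (c : ℝ) : (gaussianReal 0 1).real (Ioi c) = ∫ x in Ioi c, gaussianPDFReal 0 1 x := by
    simpa using setIntegral_gaussianReal_eq one_ne_zero measurableSet_Ioi fun _ => (1 : ℝ)
  obtain ⟨ξ, hξ, h⟩ := exists_eq_const_mul_setIntegral_of_nonneg (μ := volume)
    (g := fun _ => (1 : ℝ)) (isConnected_Icc hab) measurableSet_Icc
    (continuous_gaussianPDFReal 0 1).continuousOn (integrableOn_const measure_Icc_lt_top.ne)
    (by simpa using (integrable_gaussianPDFReal 0 1).integrableOn) fun _ _ => zero_le_one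
  refine ⟨ξ, Icc_subset_uIcc hξ, ?_⟩
  rw [htail, htail,
    intervalIntegral.integral_Ioi_sub_Ioi (integrable_gaussianPDFReal 0 1).integrableOn hab,
    intervalIntegral.integral_of_le hab, ← integral_Icc_eq_integral_Ioc]
  simpa [hab] using h

theorem gaussianPDFReal_mul_ge {x y a : ℝ} (h : y ^ 2 ≤ x ^ 2 + a ^ 2) :
    gaussianPDFReal 0 1 0 * gaussianPDFReal 0 1 a * exp (-x ^ 2)
      ≤ gaussianPDFReal 0 1 x * gaussianPDFReal 0 1 y := by
  simp only [gaussianPDFReal_zero_one]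
  have hexp : exp (-0 ^ 2 / 2) * exp (-a ^ 2 / 2) * exp (-x ^ 2)
      ≤ exp (-x ^ 2 / 2) * exp (-y ^ 2 / 2) := by
    simp only [← exp_add]
    exact exp_le_exp.2 (by linarith)
  calc _ = (√(2 * π))⁻¹ ^ 2 * (exp (-0 ^ 2 / 2) * exp (-a ^ 2 / 2) * exp (-x ^ 2)) := by ring
    _ ≤ (√(2 * π))⁻¹ ^ 2 * (exp (-x ^ 2 / 2) * exp (-y ^ 2 / 2)) := by gcongr
    _ = _ := by ring

end OneBit

/-- For the one-bit phase retrieval link function `f(z) = sign(|z| − θ)`, `θ > 0`,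
with `θ_m` the median of `|Z|`, `Z ~ N(0,1)` (i.e. `P(|Z| ≥ θ_m) = 1/2`):
`sign(φ(f)) = sign(θ − θ_m)`, there is an absolute constant `C > 0` with
`|φ(f)| ≥ C·θ·|θ − θ_m|·e^{−θ²}`; in particular `φ(f) > 0` for `θ > θ_m` and `φ(f) < 0`
for `0 < θ < θ_m`. -/
theorem one_bit_phase_retrieval_phi (θm : ℝ) (hθm : 0 < θm)
    (hmed : (gaussianReal 0 1) {z : ℝ | θm ≤ |z|} = 1 / 2) :
    ∃ C : ℝ, 0 < C ∧ ∀ θ : ℝ, 0 < θ →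
      Real.sign (phiFun fun z => Real.sign (|z| - θ)) = Real.sign (θ - θm) ∧
      C * θ * |θ - θm| * Real.exp (-θ ^ 2)
          ≤ |phiFun fun z => Real.sign (|z| - θ)| ∧
      (θm < θ → 0 < phiFun fun z => Real.sign (|z| - θ)) ∧
      (θ < θm → phiFun (fun z => Real.sign (|z| - θ)) < 0) := by
  have hpdf (x : ℝ) : 0 < gaussianPDFReal 0 1 x := gaussianPDFReal_pos 0 1 x one_ne_zero
  have hmedian := measureReal_Ioi_eq_of_median hθm.le hmed
  refine ⟨16 * (gaussianPDFReal 0 1 0 * gaussianPDFReal 0 1 θm),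
    mul_pos (by norm_num) (mul_pos (hpdf 0) (hpdf θm)), fun θ hθ => ?_⟩
  obtain ⟨ξ, hξ, hdiff⟩ := exists_measureReal_Ioi_sub_eq θm θ
  have hphi : phiFun (fun z => Real.sign (|z| - θ))
      = 16 * θ * gaussianPDFReal 0 1 θ * gaussianPDFReal 0 1 ξ * (θ - θm) := by
    rw [phiFun_sign_abs_sub hθ.le]
    linear_combination 16 * θ * gaussianPDFReal 0 1 θ * (hdiff - hmedian)
  set K := 16 * θ * gaussianPDFReal 0 1 θ * gaussianPDFReal 0 1 ξ
  have hK : 0 < K := by have := hpdf θ; have := hpdf ξ; positivity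
  have hξ2 : ξ ^ 2 ≤ θ ^ 2 + θm ^ 2 := by
    rcases mem_uIcc.1 hξ with ⟨h1, h2⟩ | ⟨h1, h2⟩ <;> nlinarith
  rw [hphi, Real.sign_mul_of_pos hK, abs_mul, abs_of_pos hK]
  refine ⟨rfl, ?_, fun h => mul_pos hK (sub_pos.2 h),
    fun h => mul_neg_of_pos_of_neg hK (sub_neg.2 h)⟩
  calc _ = 16 * θ * (gaussianPDFReal 0 1 0 * gaussianPDFReal 0 1 θm * exp (-θ ^ 2)) * |θ - θm| := by
        ring
    _ ≤ 16 * θ * (gaussianPDFReal 0 1 θ * gaussianPDFReal 0 1 ξ) * |θ - θm| :=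
      mul_le_mul_of_nonneg_right
        (mul_le_mul_of_nonneg_left (gaussianPDFReal_mul_ge hξ2) (by positivity)) (abs_nonneg _)
    _ = K * |θ - θm| := by ring
end

section
/- There exists an absolute constant c > 0 such that for all integers p and s with 1 ≤ s ≤ p/4, there is a finite subset Q ⊆ {0,1}^p satisfying: (i) every θ ∈ Q has exactly s coordinates equal to 1 (‖θ‖₀ = s); (ii) any two distinct θ, θ' ∈ Q have Hamming distance δ(θ, θ') > s/2; and (iii) log|Q| ≥ c·s·log(p/s). -/
/-!
Gilbert–Varshamov argument on the slice of `s`-subsets of `Fin p`. A maximal family `Q` of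
`s`-subsets with pairwise symmetric differences larger than `s/2` is dominating: the balls of
radius `s/2` around its members cover the slice. Such a ball has at most `2^s · C(p, s/4)`
members, since a neighbour `T` of `S` is determined by `T ∩ S ⊆ S` and by `T \ S`, which has at
most `s/4` elements. Hence `|Q| ≥ C(p, s) / (2^s · C(p, s/4)) ≥ ((p - s)/s)^(3s/4) / 2^s`, which
is at least `(p/s)^(s/20)` as soon as `p ≥ 4s`.
-/

open Finset

section Packing

variable {α : Type*} [DecidableEq α]

theorem Finset.exists_subset_pairwise_not_rel_forall_exists_rel (A : Finset α)
    {R : α → α → Prop} (hsymm : ∀ x y, R x y → R y x) (hrefl : ∀ x, R x x) :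
    ∃ Q ⊆ A, (Q : Set α).Pairwise (fun x y => ¬R x y) ∧ ∀ y ∈ A, ∃ x ∈ Q, R x y := by
  classical
  set F := A.powerset.filter fun Q : Finset α => (Q : Set α).Pairwise (fun x y => ¬R x y)
  obtain ⟨Q, hQ, hmax⟩ := F.exists_max_image card ⟨∅, by simp [F]⟩
  rw [mem_filter, mem_powerset] at hQ
  refine ⟨Q, hQ.1, hQ.2, fun y hy => ?_⟩
  by_contra! hfar
  have hyQ : y ∉ Q := fun hyQ => hfar y hyQ (hrefl y)
  have hinsert : insert y Q ∈ F := by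
    rw [mem_filter, mem_powerset, coe_insert]
    exact ⟨insert_subset hy hQ.1,
      hQ.2.insert fun x hx _ => ⟨fun h => hfar x hx (hsymm _ _ h), hfar x hx⟩⟩
  have := hmax _ hinsert
  rw [card_insert_of_notMem hyQ] at this
  omega

theorem Finset.exists_subset_pairwise_not_rel_card_le_mul (A : Finset α)
    {R : α → α → Prop} [DecidableRel R] (hsymm : ∀ x y, R x y → R y x) (hrefl : ∀ x, R x x)
    {m : ℕ} (hball : ∀ x ∈ A, #{y ∈ A | R x y} ≤ m) :
    ∃ Q ⊆ A, (Q : Set α).Pairwise (fun x y => ¬R x y) ∧ #A ≤ #Q * m := by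
  obtain ⟨Q, hQA, hQ, hcover⟩ := A.exists_subset_pairwise_not_rel_forall_exists_rel hsymm hrefl
  refine ⟨Q, hQA, hQ, ?_⟩
  calc #A ≤ #(Q.biUnion fun x => {y ∈ A | R x y}) := card_le_card fun y hy => by
        obtain ⟨x, hx, hxy⟩ := hcover y hy
        exact mem_biUnion.2 ⟨x, hx, mem_filter.2 ⟨hy, hxy⟩⟩
    _ ≤ #Q * m := card_biUnion_le_card_mul _ _ _ fun x hx => hball x (hQA hx)

end Packing

theorem Nat.sum_range_choose_le_add_choose (n k : ℕ) :
    ∑ j ∈ range (k + 1), n.choose j ≤ (n + k).choose k := by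
  induction k with
  | zero => simp
  | succ k ih =>
    rw [sum_range_succ, ← add_assoc, Nat.choose_succ_succ]
    exact add_le_add ih (Nat.choose_le_choose _ (by omega))

theorem Nat.choose_mul_sub_pow_le_choose_add_mul_pow {n s k i : ℕ} (h : k + i ≤ s) :
    n.choose k * (n - s) ^ i ≤ n.choose (k + i) * s ^ i := by
  induction i with
  | zero => simp
  | succ i ih =>
    have step : n.choose (k + i) * (n - s) ≤ n.choose (k + i + 1) * s :=
      calc n.choose (k + i) * (n - s) ≤ n.choose (k + i) * (n - (k + i)) := by gcongr; omega
        _ = n.choose (k + i + 1) * (k + i + 1) := (Nat.choose_succ_right_eq n (k + i)).symm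
        _ ≤ n.choose (k + i + 1) * s := by gcongr; omega
    calc n.choose k * (n - s) ^ (i + 1) = n.choose k * (n - s) ^ i * (n - s) := by ring
      _ ≤ n.choose (k + i) * s ^ i * (n - s) := Nat.mul_le_mul_right _ (ih (by omega))
      _ = n.choose (k + i) * (n - s) * s ^ i := by ring
      _ ≤ n.choose (k + i + 1) * s * s ^ i := by gcongr
      _ = n.choose (k + (i + 1)) * s ^ (i + 1) := by rw [← add_assoc]; ring

section Slices

variable {α : Type*} [DecidableEq α]

theorem Finset.card_filter_powerset_card_le (X : Finset α) (k : ℕ) :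
    #{E ∈ X.powerset | #E ≤ k} ≤ (#X + k).choose k :=
  calc #{E ∈ X.powerset | #E ≤ k} ≤ #((range (k + 1)).biUnion fun j => X.powersetCard j) :=
        card_le_card fun E hE => by
          rw [mem_filter, mem_powerset] at hE
          exact mem_biUnion.2 ⟨#E, mem_range.2 (by omega), mem_powersetCard.2 ⟨hE.1, rfl⟩⟩
    _ ≤ ∑ j ∈ range (k + 1), #(X.powersetCard j) := card_biUnion_le
    _ = ∑ j ∈ range (k + 1), (#X).choose j := by simp only [card_powersetCard]
    _ ≤ (#X + k).choose k := Nat.sum_range_choose_le_add_choose _ _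

theorem Finset.card_symmDiff_of_card_eq {S T : Finset α} (h : #S = #T) :
    #(symmDiff S T) = 2 * #(T \ S) := by
  rw [symmDiff_def, sup_eq_union, card_union_of_disjoint disjoint_sdiff_sdiff,
    card_sdiff_comm h]
  ring

variable [Fintype α]

theorem Finset.card_filter_card_sdiff_le (S : Finset α) (k : ℕ) :
    #{T : Finset α | #(T \ S) ≤ k} ≤ 2 ^ #S * (Fintype.card α - #S + k).choose k :=
  calc #{T : Finset α | #(T \ S) ≤ k}
      ≤ #((S.powerset ×ˢ {E ∈ Sᶜ.powerset | #E ≤ k}).image fun UE => UE.1 ∪ UE.2) :=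
        card_le_card fun T hT => by
          rw [mem_filter] at hT
          refine mem_image.2 ⟨(T ∩ S, T \ S), ?_, sup_inf_sdiff T S⟩
          simp [subset_iff, hT.2]
    _ ≤ #S.powerset * #{E ∈ Sᶜ.powerset | #E ≤ k} := card_image_le.trans (card_product _ _).le
    _ ≤ 2 ^ #S * (Fintype.card α - #S + k).choose k := by
        rw [card_powerset, ← card_compl]
        exact Nat.mul_le_mul_left _ (card_filter_powerset_card_le _ _)

theorem Finset.card_filter_two_mul_card_symmDiff_le (S : Finset α) :
    #{T ∈ powersetCard #S univ | 2 * #(symmDiff S T) ≤ #S} ≤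
      2 ^ #S * (Fintype.card α).choose (#S / 4) :=
  calc #{T ∈ powersetCard #S univ | 2 * #(symmDiff S T) ≤ #S}
      ≤ #{T : Finset α | #(T \ S) ≤ #S / 4} := card_le_card fun T hT => by
        rw [mem_filter, mem_powersetCard, card_symmDiff_of_card_eq] at hT
        · exact mem_filter.2 ⟨mem_univ T, by omega⟩
        · exact hT.1.2.symm
    _ ≤ 2 ^ #S * (Fintype.card α - #S + #S / 4).choose (#S / 4) := card_filter_card_sdiff_le S _
    _ ≤ 2 ^ #S * (Fintype.card α).choose (#S / 4) :=
        Nat.mul_le_mul_left _ (Nat.choose_le_choose _ (by have := card_le_univ S; omega))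

theorem Finset.exists_subset_powersetCard_pairwise_lt_two_mul_card_symmDiff (s : ℕ) :
    ∃ Q ⊆ powersetCard s (univ : Finset α),
      (Q : Set (Finset α)).Pairwise (fun S T => s < 2 * #(symmDiff S T)) ∧
      (Fintype.card α).choose s ≤ #Q * (2 ^ s * (Fintype.card α).choose (s / 4)) := by
  obtain ⟨Q, hQA, hQ, hcard⟩ :=
    (powersetCard s (univ : Finset α)).exists_subset_pairwise_not_rel_card_le_mul
      (R := fun S T => 2 * #(symmDiff S T) ≤ s) (m := 2 ^ s * (Fintype.card α).choose (s / 4))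
      (fun S T h => by rwa [symmDiff_comm]) (fun S => by simp) fun S hS => by
        obtain rfl := (mem_powersetCard.1 hS).2
        exact card_filter_two_mul_card_symmDiff_le S
  refine ⟨Q, hQA, hQ.mono' fun S T h => not_le.1 h, ?_⟩
  rwa [card_powersetCard, card_univ] at hcard

end Slices

theorem exists_constant_weight_code (ι : Type*) [Fintype ι] [DecidableEq ι] (s : ℕ) :
    ∃ Q : Finset (ι → Bool), (∀ θ ∈ Q, #{j | θ j = true} = s) ∧
      (∀ θ ∈ Q, ∀ θ' ∈ Q, θ ≠ θ' → s < 2 * hammingDist θ θ') ∧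
      (Fintype.card ι).choose s ≤ #Q * (2 ^ s * (Fintype.card ι).choose (s / 4)) := by
  obtain ⟨Q, hQA, hQ, hcard⟩ :=
    exists_subset_powersetCard_pairwise_lt_two_mul_card_symmDiff (α := ι) s
  let ind (S : Finset ι) (j : ι) : Bool := decide (j ∈ S)
  have hinj : ind.Injective := fun S T h => by ext j; simpa [ind] using congrFun h j
  have hweight (S : Finset ι) : #{j | ind S j = true} = #S := by simp [ind]
  have hdist (S T : Finset ι) : hammingDist (ind S) (ind T) = #(symmDiff S T) := by
    unfold hammingDist
    congr 1
    ext j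
    simp only [ind, mem_filter, mem_univ, true_and, mem_symmDiff]
    by_cases hS : j ∈ S <;> by_cases hT : j ∈ T <;> simp [hS, hT]
  refine ⟨Q.image ind, ?_, ?_, by rwa [card_image_of_injective _ hinj]⟩
  · simp only [forall_mem_image, hweight]
    exact fun S hS => (mem_powersetCard.1 (hQA hS)).2
  · simp only [forall_mem_image, hdist]
    exact fun S hS T hT hne => hQ hS hT fun h => hne (h ▸ rfl)

theorem Nat.pow_le_of_choose_le {p s N : ℕ} (hsp : s ≤ p)
    (h : p.choose s ≤ N * (2 ^ s * p.choose (s / 4))) :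
    (p - s) ^ (s - s / 4) ≤ N * 2 ^ s * s ^ (s - s / 4) := by
  have hratio := Nat.choose_mul_sub_pow_le_choose_add_mul_pow (n := p) (k := s / 4)
    (i := s - s / 4) (s := s) (by omega)
  rw [Nat.add_sub_cancel' (Nat.div_le_self s 4)] at hratio
  refine Nat.le_of_mul_le_mul_left ?_ (Nat.choose_pos (by omega : s / 4 ≤ p))
  calc p.choose (s / 4) * (p - s) ^ (s - s / 4) ≤ p.choose s * s ^ (s - s / 4) := hratio
    _ ≤ N * (2 ^ s * p.choose (s / 4)) * s ^ (s - s / 4) := Nat.mul_le_mul_right _ h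
    _ = p.choose (s / 4) * (N * 2 ^ s * s ^ (s - s / 4)) := by ring

theorem Real.one_div_twenty_mul_log_le {x : ℝ} (hx : 4 ≤ x) :
    1 / 20 * Real.log x ≤ 3 / 4 * Real.log (x - 1) - Real.log 2 := by
  have hlog4 : Real.log 4 = 2 * Real.log 2 := by
    rw [show (4 : ℝ) = 2 ^ 2 by norm_num, Real.log_pow]; norm_num
  have hlog_sub : Real.log x + Real.log 3 - 2 * Real.log 2 ≤ Real.log (x - 1) := by
    have := Real.log_le_log (by positivity) (show 3 / 4 * x ≤ x - 1 by linarith)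
    rw [Real.log_mul (by norm_num) (by positivity), Real.log_div (by norm_num) (by norm_num),
      hlog4] at this
    linarith
  have hlog_x : 2 * Real.log 2 ≤ Real.log x := hlog4 ▸ Real.log_le_log (by norm_num) hx
  have hlog_three : 3 * Real.log 2 ≤ 2 * Real.log 3 := by
    have := Real.log_le_log (by norm_num) (show (2 : ℝ) ^ 3 ≤ 3 ^ 2 by norm_num)
    rwa [Real.log_pow, Real.log_pow] at this
  linarith [Real.log_nonneg (by norm_num : (1 : ℝ) ≤ 2)]

theorem Real.mul_log_div_le_log_of_pow_le {p s N : ℕ} (hs : 1 ≤ s) (hsp : 4 * s ≤ p)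
    (h : (p - s) ^ (s - s / 4) ≤ N * 2 ^ s * s ^ (s - s / 4)) :
    1 / 20 * s * Real.log (p / s) ≤ Real.log N := by
  have hs0 : (0 : ℝ) < s := by exact_mod_cast hs
  set x : ℝ := p / s
  have hx : 4 ≤ x := by rw [le_div_iff₀ hs0]; exact_mod_cast hsp
  have hpow : (x - 1) ^ (s - s / 4) ≤ N * 2 ^ s := by
    have hsub : ((p - s : ℕ) : ℝ) / s = x - 1 := by
      rw [Nat.cast_sub (by omega), sub_div, div_self hs0.ne']
    rw [← hsub, div_pow, div_le_iff₀ (by positivity)]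
    exact_mod_cast h
  have hpow_pos : 0 < (x - 1) ^ (s - s / 4) := pow_pos (by linarith) _
  have hN : (0 : ℝ) < N := (mul_pos_iff_of_pos_right (by positivity)).1 (hpow_pos.trans_le hpow)
  have hlog : (s - s / 4 : ℕ) * Real.log (x - 1) ≤ Real.log N + s * Real.log 2 := by
    have := Real.log_le_log hpow_pos hpow
    rwa [Real.log_pow, Real.log_mul hN.ne' (by positivity), Real.log_pow] at this
  have hk : 3 / 4 * (s : ℝ) ≤ (s - s / 4 : ℕ) := by
    have : 4 * ((s / 4 : ℕ) : ℝ) ≤ s := by exact_mod_cast Nat.mul_div_le s 4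
    rw [Nat.cast_sub (Nat.div_le_self _ _)]
    linarith
  linarith [mul_le_mul_of_nonneg_right hk (Real.log_nonneg (by linarith : (1 : ℝ) ≤ x - 1)),
    mul_le_mul_of_nonneg_left (Real.one_div_twenty_mul_log_le hx) hs0.le]

/-- There is an absolute constant `c > 0` such that for all `p, s` with
`1 ≤ s ≤ p/4` there is a finite set `Q ⊆ {0,1}^p` in which every element has exactly `s`
ones, distinct elements are at Hamming distance greater than `s/2`, and
`log|Q| ≥ c·s·log(p/s)`. -/
theorem packing_set_exists :
    ∃ c : ℝ, 0 < c ∧ ∀ p s : ℕ, 1 ≤ s → (s : ℝ) ≤ (p : ℝ) / 4 →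
      ∃ Q : Finset (Fin p → Bool),
        (∀ θ ∈ Q, #{j | θ j = true} = s) ∧
        (∀ θ ∈ Q, ∀ θ' ∈ Q, θ ≠ θ' → (s : ℝ) / 2 < (hammingDist θ θ' : ℝ)) ∧
        c * s * Real.log ((p : ℝ) / s) ≤ Real.log (Q.card : ℝ) := by
  refine ⟨1 / 20, by norm_num, fun p s hs hsp => ?_⟩
  have hsp : 4 * s ≤ p := by exact_mod_cast (by linarith : (4 * s : ℝ) ≤ p)
  obtain ⟨Q, hweight, hdist, hcard⟩ := exists_constant_weight_code (Fin p) s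
  rw [Fintype.card_fin] at hcard
  refine ⟨Q, hweight, fun θ hθ θ' hθ' hne => ?_,
    Real.mul_log_div_le_log_of_pow_le hs hsp (Nat.pow_le_of_choose_le (by omega) hcard)⟩
  have : (s : ℝ) < 2 * hammingDist θ θ' := by exact_mod_cast hdist θ hθ θ' hθ' hne
  linarith
end

section
/- Let s ≥ 2, ξ ∈ (0,1), and let Q ⊆ {0,1}^{p−1} be a set such that every w ∈ Q has exactly s−1 ones and any two distinct w, w' ∈ Q have Hamming distance greater than (s−1)/2. Define Q̄ = { β ∈ ℝ^p : β = (√(1−ξ²), (ξ/√(s−1))·w) for some w ∈ Q }. Then: (i) every θ ∈ Q̄ satisfies ‖θ‖₂ = 1 and ‖θ‖₀ = s; (ii) any two distinct θ, θ' ∈ Q̄ satisfy (√2/2)·ξ ≤ ‖θ − θ'‖₂ ≤ √2·ξ; and (iii) |Q̄| = |Q|. -/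
/-!
For `θ_w = (a, c • w)` with `a² = 1 - ξ²` and `c² = ξ² / (s - 1)` one has
`‖θ_w‖² = a² + c² |w|` and `‖θ_w - θ_w'‖² = c² d_H(w, w')`. Since `|w| = s - 1`, the first is `1`,
and the Hamming bounds `(s - 1) / 2 < d_H(w, w') ≤ 2 (s - 1)` (the upper one is the triangle
inequality through the zero word) give `ξ² / 2 < ‖θ_w - θ_w'‖² ≤ 2 ξ²`.
-/

open Finset

section HammingBool

variable {ι : Type*} [Fintype ι]

theorem hammingDist_const_false (w : ι → Bool) :
    hammingDist w (fun _ => false) = #{i | w i = true} := by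
  simp [hammingDist]

theorem hammingDist_le_card_add_card (w w' : ι → Bool) :
    hammingDist w w' ≤ #{i | w i = true} + #{i | w' i = true} := by
  simpa [hammingDist_const_false, hammingDist_comm _ w'] using
    hammingDist_triangle w (fun _ => false) w'

end HammingBool

def sparseLift {n : ℕ} (a c : ℝ) (w : Fin n → Bool) : Fin (n + 1) → ℝ :=
  Fin.cons a fun j => c * if w j then 1 else 0

section SparseLift

variable {n : ℕ} {a c : ℝ}

theorem sparseLift_injective (hc : c ≠ 0) : Function.Injective (sparseLift (n := n) a c) := by
  intro w w' h
  funext j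
  have := congrFun h j.succ
  simp only [sparseLift, Fin.cons_succ, mul_eq_mul_left_iff, hc, or_false] at this
  revert this
  cases w j <;> cases w' j <;> simp

theorem sum_sq_sparseLift (w : Fin n → Bool) :
    ∑ i, sparseLift a c w i ^ 2 = a ^ 2 + c ^ 2 * #{j | w j = true} := by
  simp [sparseLift, Fin.sum_univ_succ, Finset.sum_ite, mul_comm]

theorem sum_sq_sub_sparseLift (w w' : Fin n → Bool) :
    ∑ i, (sparseLift a c w i - sparseLift a c w' i) ^ 2 = c ^ 2 * hammingDist w w' := by
  have hsq (j : Fin n) : ((c * if w j then 1 else 0) - c * if w' j then 1 else 0) ^ 2 =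
      if w j ≠ w' j then c ^ 2 else 0 := by
    cases w j <;> cases w' j <;> simp
  simp only [sparseLift, Fin.sum_univ_succ, Fin.cons_zero, Fin.cons_succ, sub_self, hsq]
  simp [Finset.sum_ite, hammingDist, mul_comm]

theorem card_ne_zero_sparseLift (ha : a ≠ 0) (hc : c ≠ 0) (w : Fin n → Bool) :
    #{i | sparseLift a c w i ≠ 0} = #{j | w j = true} + 1 := by
  rw [Fin.card_filter_univ_succ]
  simp [sparseLift, ha, hc]

end SparseLift

theorem sqrt_sq_div_mul_mem_Icc {ξ m d : ℝ} (hξ : 0 ≤ ξ) (hm : 0 < m) (hd : m / 2 < d)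
    (hd' : d ≤ 2 * m) : √(ξ ^ 2 / m * d) ∈ Set.Icc (√2 / 2 * ξ) (√2 * ξ) := by
  have h2 : √2 ^ 2 = 2 := Real.sq_sqrt zero_le_two
  have hd0 : 0 < d := by linarith
  constructor
  · rw [Real.le_sqrt (by positivity) (by positivity), mul_pow, div_pow, h2,
      div_mul_eq_mul_div, div_mul_eq_mul_div, div_le_div_iff₀ (by norm_num) hm]
    nlinarith
  · rw [Real.sqrt_le_left (by positivity), mul_pow, h2, div_mul_eq_mul_div, div_le_iff₀ hm]
    nlinarith

open Classical in
/-- Let `s ≥ 2`, `ξ ∈ (0,1)`, and let `Q ⊆ {0,1}^p` be such that every `w ∈ Q`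
has exactly `s−1` ones and distinct elements of `Q` are at Hamming distance `> (s−1)/2`.
Let `Q̄ ⊆ ℝ^{p+1}` consist of the vectors `β = (√(1−ξ²), (ξ/√(s−1))·w)`, `w ∈ Q`. Then
(i) every `θ ∈ Q̄` has unit Euclidean norm and exactly `s` nonzero coordinates;
(ii) distinct `θ, θ' ∈ Q̄` satisfy `(√2/2)·ξ ≤ ‖θ − θ'‖₂ ≤ √2·ξ`; (iii) `|Q̄| = |Q|`. -/
theorem sparse_packing_lift (p s : ℕ) (hs : 2 ≤ s) (ξ : ℝ) (hξ0 : 0 < ξ) (hξ1 : ξ < 1)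
    (Q : Finset (Fin p → Bool))
    (hones : ∀ w ∈ Q, #{j | w j = true} = s - 1)
    (hdist : ∀ w ∈ Q, ∀ w' ∈ Q, w ≠ w' → ((s : ℝ) - 1) / 2 < (hammingDist w w' : ℝ))
    (Qbar : Finset (Fin (p + 1) → ℝ))
    (hQbar : Qbar = Q.image (fun w => Fin.cons (Real.sqrt (1 - ξ ^ 2))
      (fun j => (ξ / Real.sqrt ((s : ℝ) - 1)) * (if w j then 1 else 0)))) :
    (∀ θ ∈ Qbar, Real.sqrt (∑ i, θ i ^ 2) = 1 ∧ #{i | θ i ≠ 0} = s) ∧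
    (∀ θ ∈ Qbar, ∀ θ' ∈ Qbar, θ ≠ θ' →
      Real.sqrt 2 / 2 * ξ ≤ Real.sqrt (∑ i, (θ i - θ' i) ^ 2) ∧
      Real.sqrt (∑ i, (θ i - θ' i) ^ 2) ≤ Real.sqrt 2 * ξ) ∧
    Qbar.card = Q.card := by
  set a := √(1 - ξ ^ 2)
  set c := ξ / √((s : ℝ) - 1)
  change Qbar = Q.image (sparseLift a c) at hQbar
  subst hQbar
  have hs1 : (0 : ℝ) < s - 1 := sub_pos.2 (by exact_mod_cast hs)
  have ha : a ^ 2 = 1 - ξ ^ 2 := Real.sq_sqrt (by nlinarith)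
  have ha0 : a ≠ 0 := (Real.sqrt_pos.2 (by nlinarith)).ne'
  have hc : c ^ 2 = ξ ^ 2 / (s - 1) := by rw [div_pow, Real.sq_sqrt hs1.le]
  have hc0 : c ≠ 0 := (div_pos hξ0 (Real.sqrt_pos.2 hs1)).ne'
  have hones' (w) (hw : w ∈ Q) : (#{j | w j = true} : ℝ) = s - 1 := by
    rw [hones w hw, Nat.cast_sub (by omega), Nat.cast_one]
  refine ⟨?_, ?_, card_image_of_injective Q (sparseLift_injective hc0)⟩
  · simp only [forall_mem_image]
    intro w hw
    refine ⟨?_, by rw [card_ne_zero_sparseLift ha0 hc0, hones w hw]; omega⟩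
    rw [sum_sq_sparseLift, ha, hc, hones' w hw, div_mul_cancel₀ _ hs1.ne', sub_add_cancel,
      Real.sqrt_one]
  · simp only [forall_mem_image]
    intro w hw w' hw' hne
    have hd := hdist w hw w' hw' (fun h => hne (h ▸ rfl))
    have hd' : (hammingDist w w' : ℝ) ≤ 2 * (s - 1) := calc
      _ ≤ (#{j | w j = true} : ℝ) + #{j | w' j = true} := by
        exact_mod_cast hammingDist_le_card_add_card w w'
      _ = 2 * (s - 1) := by rw [hones' w hw, hones' w' hw']; ring
    rw [sum_sq_sub_sparseLift, hc]
    exact sqrt_sq_div_mul_mem_Icc hξ0.le hs1 hd hd'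
end
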